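/- arXiv:0712.3430 — 4 statements merged into one kernel-verified Lean document; each statement's English description precedes it below -/
import Mathlib

section
/- Let R be a ring, δ a derivation on R, and let F₁ ⊆ F₂ be Gabriel filters of right ideals of R with associated hereditary torsion theories τ₁, τ₂. Let M be a right R-module with a δ-derivation d. Suppose d extends to a derivation d₁ on the module of quotients M_{F₁} (i.e. d₁q₁ = q₁d). If either (i) d₁ extends to a derivation d₂ on M_{F₂} (i.e. d₂q₁₂ = q₁₂d₁), or (ii) d extends to a derivation d₂ on M_{F₂} (i.e. d₂q₂ = q₂d), then the extensions of d to M_{F₁} and M_{F₂} agree, i.e. all three identities d₁q₁ = q₁d, d₂q₂ = q₂d and d₂q₁₂ = q₁₂d₁ hold. -/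
open MulOpposite

/-- A derivation on a ring `S`: an additive map satisfying the Leibniz rule
`δ (a * b) = δ a * b + a * δ b`. -/
def IsDerivation {S : Type*} [Ring S] (δ : S → S) : Prop :=
  (∀ a b : S, δ (a + b) = δ a + δ b) ∧ (∀ a b : S, δ (a * b) = δ a * b + a * δ b)

/-- A Gabriel filter of left ideals of a ring `S`.  Taking `S = Rᵐᵒᵖ`, this encodes a
Gabriel filter of right ideals of `R` (a right ideal of `R` is a left ideal of `Rᵐᵒᵖ`). -/
structure GabrielFilter (S : Type*) [Ring S] where
  sets : Set (Ideal S)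
  top_mem : ⊤ ∈ sets
  mono : ∀ ⦃I J : Ideal S⦄, I ∈ sets → I ≤ J → J ∈ sets
  inf_mem : ∀ ⦃I J : Ideal S⦄, I ∈ sets → J ∈ sets → I ⊓ J ∈ sets
  quot_mem : ∀ ⦃I : Ideal S⦄, I ∈ sets → ∀ s : S,
    Submodule.comap (LinearMap.toSpanSingleton S S s) I ∈ sets
  trans : ∀ ⦃I J : Ideal S⦄, J ∈ sets →
    (∀ s ∈ J, Submodule.comap (LinearMap.toSpanSingleton S S s) I ∈ sets) → I ∈ sets

/-- A Gabriel filter of right ideals of `R`, encoded as a Gabriel filter of left ideals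
of `Rᵐᵒᵖ`. -/
abbrev RightGabrielFilter (R : Type*) [Ring R] := GabrielFilter Rᵐᵒᵖ

/-- The torsion set of a module for the hereditary torsion theory corresponding to a
(Gabriel) filter `𝔉` of ideals: the elements whose annihilator ideal belongs to `𝔉`. -/
def torsionSet {S : Type*} [Ring S] (𝔉 : Set (Ideal S)) (M : Type*) [AddCommGroup M]
    [Module S M] : Set M :=
  {x : M | LinearMap.ker (LinearMap.toSpanSingleton S M x) ∈ 𝔉}

/-- `q : M → Q` realizes `Q` as the module of quotients of `M` with respect to the filter
`𝔉`: the kernel of `q` is the torsion submodule of `M`, `Q` is torsion free, the cokernel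
of `q` is torsion, and `Q` is `𝔉`-injective (closed). -/
structure IsModuleOfQuotients {S : Type*} [Ring S] (𝔉 : Set (Ideal S)) {M Q : Type*}
    [AddCommGroup M] [Module S M] [AddCommGroup Q] [Module S Q] (q : M →ₗ[S] Q) : Prop where
  ker_eq : (LinearMap.ker q : Set M) = torsionSet 𝔉 M
  torsionFree : torsionSet 𝔉 Q = {0}
  coker_torsion : ∀ y : Q,
    Submodule.comap (LinearMap.toSpanSingleton S Q y) (LinearMap.range q) ∈ 𝔉
  closed : ∀ I ∈ 𝔉, ∀ f : ↥I →ₗ[S] Q, ∃ g : S →ₗ[S] Q, ∀ x : ↥I, g ↑x = f x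

/-- `d` is a `δ`-derivation on the right `R`-module `M` (encoded as a left `Rᵐᵒᵖ`-module):
`d` is additive and `d (x·r) = (d x)·r + x·(δ r)`. -/
def IsRightModuleDerivation {R : Type*} [Ring R] (δ : R → R) {M : Type*} [AddCommGroup M]
    [Module Rᵐᵒᵖ M] (d : M → M) : Prop :=
  (∀ x y : M, d (x + y) = d x + d y) ∧
    ∀ (x : M) (r : R), d (op r • x) = op r • d x + op (δ r) • x

/-- A right Gabriel filter is differential if for every `I` in the filter there is `J` in
the filter with `δ(J) ⊆ I` for every derivation `δ`. -/
def IsDifferentialRight {R : Type*} [Ring R] (F : RightGabrielFilter R) : Prop :=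
  ∀ I ∈ F.sets, ∃ J ∈ F.sets, ∀ δ : R → R, IsDerivation δ →
    ∀ x : Rᵐᵒᵖ, x ∈ J → op (δ (unop x)) ∈ I

/-- `q : R → Q` realizes the ring `Q` as the right ring of quotients of `R` with respect
to the right Gabriel filter `F`.  The right `R`-module structure of `Q` is the one coming
from the ring structure via `q`, and `q` is a ring homomorphism which is a module of
quotients map. -/
structure IsRightRingOfQuotients {R : Type*} [Ring R] (F : RightGabrielFilter R)
    {Q : Type*} [Ring Q] [Module Rᵐᵒᵖ Q] (q : R →ₗ[Rᵐᵒᵖ] Q) : Prop where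
  smul_def : ∀ (r : R) (y : Q), op r • y = y * q r
  map_mul : ∀ a b : R, q (a * b) = q a * q b
  map_one : q 1 = 1
  quotients : IsModuleOfQuotients F.sets q

/-- Let `F₁ ⊆ F₂` be Gabriel filters of right ideals of `R`, `δ` a
derivation on `R` and `d` a `δ`-derivation on a right `R`-module `M`.  Suppose `d`
extends to a derivation `d₁` on the module of quotients `M_{F₁}`.  If either `d₁`
extends to a derivation `d₂` on `M_{F₂}`, or `d` extends to a derivation `d₂` on
`M_{F₂}`, then the extensions of `d` to `M_{F₁}` and `M_{F₂}` agree, i.e. all three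
identities `d₁q₁ = q₁d`, `d₂q₂ = q₂d` and `d₂q₁₂ = q₁₂d₁` hold. -/
theorem extensions_agree_of_extends {R : Type*} [Ring R]
    (F₁ F₂ : RightGabrielFilter R) (hF : F₁.sets ⊆ F₂.sets)
    (δ : R → R) (hδ : IsDerivation δ)
    {M Q₁ Q₂ : Type*} [AddCommGroup M] [Module Rᵐᵒᵖ M]
    [AddCommGroup Q₁] [Module Rᵐᵒᵖ Q₁] [AddCommGroup Q₂] [Module Rᵐᵒᵖ Q₂]
    (q₁ : M →ₗ[Rᵐᵒᵖ] Q₁) (q₂ : M →ₗ[Rᵐᵒᵖ] Q₂) (q₁₂ : Q₁ →ₗ[Rᵐᵒᵖ] Q₂)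
    (hq₁ : IsModuleOfQuotients F₁.sets q₁) (hq₂ : IsModuleOfQuotients F₂.sets q₂)
    (hq₁₂ : ∀ x : M, q₁₂ (q₁ x) = q₂ x)
    (d : M → M) (hd : IsRightModuleDerivation δ d)
    (d₁ : Q₁ → Q₁) (hd₁ : IsRightModuleDerivation δ d₁)
    (hext₁ : ∀ x : M, d₁ (q₁ x) = q₁ (d x))
    (d₂ : Q₂ → Q₂) (hd₂ : IsRightModuleDerivation δ d₂)
    (h : (∀ y : Q₁, d₂ (q₁₂ y) = q₁₂ (d₁ y)) ∨ (∀ x : M, d₂ (q₂ x) = q₂ (d x))) :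
    (∀ x : M, d₁ (q₁ x) = q₁ (d x)) ∧ (∀ x : M, d₂ (q₂ x) = q₂ (d x)) ∧
      (∀ y : Q₁, d₂ (q₁₂ y) = q₁₂ (d₁ y)) := by
  rcases h with h | h
  · exact ⟨hext₁, fun x => by rw [← hq₁₂ x, h, hext₁, hq₁₂], h⟩
  · refine ⟨hext₁, h, fun y => ?_⟩
    have hg0 : ∀ x : M, d₂ (q₁₂ (q₁ x)) - q₁₂ (d₁ (q₁ x)) = 0 := fun x => by
      rw [hq₁₂, hext₁, hq₁₂, h, sub_self]
    have hsmul : ∀ (r : R) (y : Q₁),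
        d₂ (q₁₂ (op r • y)) - q₁₂ (d₁ (op r • y))
          = op r • (d₂ (q₁₂ y) - q₁₂ (d₁ y)) := by
      intro r y
      rw [map_smul, hd₂.2, hd₁.2, map_add, map_smul, map_smul, smul_sub]
      abel
    have hmem : d₂ (q₁₂ y) - q₁₂ (d₁ y) ∈ torsionSet F₂.sets Q₂ := by
      refine F₂.mono (hF (hq₁.coker_torsion y)) ?_
      rintro s hs
      obtain ⟨x, hx⟩ := hs
      simp only [LinearMap.mem_ker, LinearMap.toSpanSingleton_apply]
      calc s • (d₂ (q₁₂ y) - q₁₂ (d₁ y))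
          = op (unop s) • (d₂ (q₁₂ y) - q₁₂ (d₁ y)) := by rw [op_unop]
        _ = d₂ (q₁₂ (op (unop s) • y)) - q₁₂ (d₁ (op (unop s) • y)) :=
            (hsmul (unop s) y).symm
        _ = 0 := by
            rw [op_unop]
            have : s • y = q₁ x := hx.symm
            rw [this]; exact hg0 x
    have h0 : d₂ (q₁₂ y) - q₁₂ (d₁ y) = 0 := by
      have := hq₂.torsionFree ▸ hmem
      simpa using this
    exact sub_eq_zero.mp h0
end

section
/- Let R be a ring and F₁ ⊆ F₂ Gabriel filters of right ideals of R, with F₁ differential, and let M be a right R-module. If either (i) M_{F₁} is torsion-free with respect to the torsion theory corresponding to F₂, or (ii) F₂ is differential, then every δ-derivation d on M (for every derivation δ on R) extends both to a derivation d₁ on M_{F₁} and to a derivation d₂ on M_{F₂} in such a way that the extensions on M_{F₁} and M_{F₂} agree (d₁q₁ = q₁d, d₂q₂ = q₂d, d₂q₁₂ = q₁₂d₁). -/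
open MulOpposite

section Aux

variable {R : Type*} [Ring R]

lemma deriv_zero' {M : Type*} [AddCommGroup M] [Module Rᵐᵒᵖ M] {δ : R → R}
    {d : M → M} (hd : IsRightModuleDerivation δ d) : d 0 = 0 := by
  have h := hd.1 0 0
  rw [add_zero] at h
  exact (left_eq_add.mp h)

lemma deriv_sub' {M : Type*} [AddCommGroup M] [Module Rᵐᵒᵖ M] {δ : R → R}
    {d : M → M} (hd : IsRightModuleDerivation δ d) (x y : M) : d (x - y) = d x - d y := by
  have hneg : ∀ z : M, d (-z) = -d z := by
    intro z
    have h := hd.1 z (-z)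
    rw [add_neg_cancel, deriv_zero' hd] at h
    exact (eq_neg_of_add_eq_zero_right h.symm)
  rw [sub_eq_add_neg, hd.1, hneg, sub_eq_add_neg]

lemma mem_torsion_of_ann {F : RightGabrielFilter R} {Q : Type*} [AddCommGroup Q]
    [Module Rᵐᵒᵖ Q] {z : Q} {I : Ideal Rᵐᵒᵖ} (hI : I ∈ F.sets)
    (h : ∀ i ∈ I, i • z = 0) : z ∈ torsionSet F.sets Q := by
  show LinearMap.ker (LinearMap.toSpanSingleton Rᵐᵒᵖ Q z) ∈ F.sets
  refine F.mono hI fun i hi => ?_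
  rw [LinearMap.mem_ker, LinearMap.toSpanSingleton_apply]
  exact h i hi

lemma ann_zero {F : RightGabrielFilter R} {Q : Type*} [AddCommGroup Q]
    [Module Rᵐᵒᵖ Q] (htf : torsionSet F.sets Q = {0}) {z : Q} {I : Ideal Rᵐᵒᵖ}
    (hI : I ∈ F.sets) (h : ∀ i ∈ I, i • z = 0) : z = 0 := by
  have hz := mem_torsion_of_ann hI h
  rw [htf] at hz
  exact hz

lemma diff_pres (F : RightGabrielFilter R) (hdiff : IsDifferentialRight F)
    {M : Type*} [AddCommGroup M] [Module Rᵐᵒᵖ M] {δ : R → R} (hδ : IsDerivation δ)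
    {d : M → M} (hd : IsRightModuleDerivation δ d) :
    ∀ x ∈ torsionSet F.sets M, d x ∈ torsionSet F.sets M := by
  intro x hx
  have hI : LinearMap.ker (LinearMap.toSpanSingleton Rᵐᵒᵖ M x) ∈ F.sets := hx
  obtain ⟨J, hJ, hJI⟩ := hdiff _ hI
  show LinearMap.ker (LinearMap.toSpanSingleton Rᵐᵒᵖ M (d x)) ∈ F.sets
  refine F.mono (F.inf_mem hJ hI) fun i hi => ?_
  obtain ⟨hiJ, hiI⟩ := Submodule.mem_inf.mp hi
  rw [LinearMap.mem_ker, LinearMap.toSpanSingleton_apply]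
  have hx0 : i • x = 0 := by
    rw [LinearMap.mem_ker, LinearMap.toSpanSingleton_apply] at hiI
    exact hiI
  have hδ0 : op (δ (unop i)) • x = 0 := by
    have h := hJI δ hδ i hiJ
    rw [LinearMap.mem_ker, LinearMap.toSpanSingleton_apply] at h
    exact h
  have h2 := hd.2 x (unop i)
  rw [op_unop, hx0, deriv_zero' hd, hδ0, add_zero] at h2
  exact h2.symm

lemma exists_extension (F : RightGabrielFilter R)
    {M Q : Type*} [AddCommGroup M] [Module Rᵐᵒᵖ M] [AddCommGroup Q] [Module Rᵐᵒᵖ Q]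
    (q : M →ₗ[Rᵐᵒᵖ] Q) (hq : IsModuleOfQuotients F.sets q)
    {δ : R → R} (hδ : IsDerivation δ)
    {d : M → M} (hd : IsRightModuleDerivation δ d)
    (hpres : ∀ x ∈ torsionSet F.sets M, d x ∈ torsionSet F.sets M) :
    ∃ d' : Q → Q, IsRightModuleDerivation δ d' ∧ ∀ x : M, d' (q x) = q (d x) := by
  classical
  -- q (d m) only depends on q m
  have hker : ∀ m : M, q m = 0 → q (d m) = 0 := by
    intro m hm
    have hmt : m ∈ torsionSet F.sets M := by
      rw [← hq.ker_eq]; exact LinearMap.mem_ker.mpr hm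
    have := hpres m hmt
    rw [← hq.ker_eq] at this
    exact LinearMap.mem_ker.mp this
  have hsub : ∀ m m' : M, q m = q m' → q (d m) = q (d m') := by
    intro m m' hmm
    have h0 : q (m - m') = 0 := by rw [map_sub, hmm, sub_self]
    have := hker (m - m') h0
    rw [deriv_sub' hd, map_sub, sub_eq_zero] at this
    exact this
  have key : ∀ y : Q, ∃ z : Q, ∀ (i : Rᵐᵒᵖ) (m : M),
      q m = i • y → i • z = q (d m) - op (δ (unop i)) • y := by
    intro y
    set Iy : Ideal Rᵐᵒᵖ :=
      Submodule.comap (LinearMap.toSpanSingleton Rᵐᵒᵖ Q y) (LinearMap.range q) with hIydef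
    have hIy : Iy ∈ F.sets := hq.coker_torsion y
    have hmem : ∀ i : ↥Iy, ∃ m : M, q m = (i : Rᵐᵒᵖ) • y := by
      intro i
      have h2 : LinearMap.toSpanSingleton Rᵐᵒᵖ Q y (i : Rᵐᵒᵖ) ∈ LinearMap.range q :=
        Submodule.mem_comap.mp i.2
      rw [LinearMap.toSpanSingleton_apply] at h2
      exact LinearMap.mem_range.mp h2
    set mf : ↥Iy → M := fun i => (hmem i).choose with hmfdef
    have hmf : ∀ i : ↥Iy, q (mf i) = (i : Rᵐᵒᵖ) • y := fun i => (hmem i).choose_spec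
    let f : ↥Iy →ₗ[Rᵐᵒᵖ] Q :=
    { toFun := fun i => q (d (mf i)) - op (δ (unop (i : Rᵐᵒᵖ))) • y
      map_add' := by
        intro i j
        have h1 : q (d (mf (i + j))) = q (d (mf i)) + q (d (mf j)) := by
          have h := hsub (mf (i + j)) (mf i + mf j) (by
            rw [hmf, map_add, hmf, hmf, Submodule.coe_add, add_smul])
          rw [h, hd.1, map_add]
        rw [h1, Submodule.coe_add, unop_add, hδ.1, op_add, add_smul]
        abel
      map_smul' := by
        intro s i
        have hcoe : ((s • i : ↥Iy) : Rᵐᵒᵖ) = s * (i : Rᵐᵒᵖ) := rfl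
        have h1 : q (d (mf (s • i))) = q (d (op (unop s) • mf i)) := by
          apply hsub
          rw [hmf, map_smul, hmf, op_unop, hcoe, mul_smul]
        have h2 : d (op (unop s) • mf i) = op (unop s) • d (mf i) + op (δ (unop s)) • mf i :=
          hd.2 (mf i) (unop s)
        simp only [RingHom.id_apply]
        rw [h1, h2, map_add, map_smul, map_smul, hmf, hcoe]
        simp only [unop_mul, hδ.2, op_add, add_smul, op_mul, mul_smul, op_unop,
          smul_sub, smul_add]
        abel
      }
    obtain ⟨g, hg⟩ := hq.closed Iy hIy f
    refine ⟨g 1, fun i m hqm => ?_⟩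
    have hiIy : i ∈ Iy := by
      rw [hIydef, Submodule.mem_comap, LinearMap.toSpanSingleton_apply]
      exact ⟨m, hqm⟩
    have h1 : i • g 1 = g i := by rw [← map_smul, smul_eq_mul, mul_one]
    have h2 := hg ⟨i, hiIy⟩
    rw [h1]
    have h3 : g ((⟨i, hiIy⟩ : ↥Iy) : Rᵐᵒᵖ) =
        q (d (mf ⟨i, hiIy⟩)) - op (δ (unop i)) • y := h2
    rw [h3, hsub (mf ⟨i, hiIy⟩) m (by rw [hmf]; exact hqm.symm)]
  choose d' hrel using key
  refine ⟨d', ⟨?_, ?_⟩, ?_⟩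
  · -- additivity
    intro y y'
    rw [← sub_eq_zero]
    refine ann_zero hq.torsionFree
      (F.inf_mem (hq.coker_torsion y) (hq.coker_torsion y')) fun i hi => ?_
    obtain ⟨hi1, hi2⟩ := Submodule.mem_inf.mp hi
    rw [Submodule.mem_comap, LinearMap.toSpanSingleton_apply] at hi1 hi2
    obtain ⟨m, hm⟩ := LinearMap.mem_range.mp hi1
    obtain ⟨m', hm'⟩ := LinearMap.mem_range.mp hi2
    have h1 := hrel (y + y') i (m + m') (by rw [map_add, hm, hm', smul_add])
    have h2 := hrel y i m hm
    have h3 := hrel y' i m' hm'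
    rw [smul_sub, smul_add, h1, h2, h3, hd.1, map_add, smul_add]
    abel
  · -- derivation property
    intro y r
    rw [← sub_eq_zero]
    refine ann_zero hq.torsionFree (F.quot_mem (hq.coker_torsion y) (op r)) fun i hi => ?_
    rw [Submodule.mem_comap, LinearMap.toSpanSingleton_apply, smul_eq_mul,
      Submodule.mem_comap, LinearMap.toSpanSingleton_apply] at hi
    obtain ⟨m, hm⟩ := LinearMap.mem_range.mp hi
    have h2 := hrel y (i * op r) m hm
    rw [mul_smul] at h2
    have h1 := hrel (op r • y) i m (by rw [← mul_smul]; exact hm)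
    rw [smul_sub, h1, smul_add, h2]
    simp only [unop_mul, unop_op, hδ.2, op_add, add_smul, op_mul, mul_smul, op_unop,
      smul_sub, smul_add]
    abel
  · -- extension
    intro x
    rw [← sub_eq_zero]
    refine ann_zero hq.torsionFree F.top_mem fun i _ => ?_
    have h1 := hrel (q x) i (i • x) (map_smul q i x)
    have h2 : d (i • x) = i • d x + op (δ (unop i)) • x := by
      have h := hd.2 x (unop i)
      rwa [op_unop] at h
    rw [smul_sub, h1, h2, map_add, map_smul, map_smul]
    abel

lemma q12_quotients {F₁ F₂ : RightGabrielFilter R} (hF : F₁.sets ⊆ F₂.sets)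
    {M Q₁ Q₂ : Type*} [AddCommGroup M] [Module Rᵐᵒᵖ M]
    [AddCommGroup Q₁] [Module Rᵐᵒᵖ Q₁] [AddCommGroup Q₂] [Module Rᵐᵒᵖ Q₂]
    (q₁ : M →ₗ[Rᵐᵒᵖ] Q₁) (q₂ : M →ₗ[Rᵐᵒᵖ] Q₂) (q₁₂ : Q₁ →ₗ[Rᵐᵒᵖ] Q₂)
    (hq₁ : IsModuleOfQuotients F₁.sets q₁) (hq₂ : IsModuleOfQuotients F₂.sets q₂)
    (hq₁₂ : ∀ x : M, q₁₂ (q₁ x) = q₂ x)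
    (htf : torsionSet F₂.sets Q₁ = {0}) :
    IsModuleOfQuotients F₂.sets q₁₂ := by
  constructor
  · -- ker_eq
    rw [htf]
    ext y
    simp only [SetLike.mem_coe, LinearMap.mem_ker, Set.mem_singleton_iff]
    constructor
    · intro hy
      refine ann_zero htf (hF (hq₁.coker_torsion y)) fun i hi => ?_
      rw [Submodule.mem_comap, LinearMap.toSpanSingleton_apply] at hi
      obtain ⟨m, hm⟩ := LinearMap.mem_range.mp hi
      have hm2 : q₂ m = 0 := by
        rw [← hq₁₂, hm, map_smul, hy, smul_zero]
      have hmt : m ∈ torsionSet F₂.sets M := by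
        rw [← hq₂.ker_eq]; exact LinearMap.mem_ker.mpr hm2
      have hK : LinearMap.ker (LinearMap.toSpanSingleton Rᵐᵒᵖ M m) ∈ F₂.sets := hmt
      refine ann_zero htf hK fun k hk => ?_
      rw [LinearMap.mem_ker, LinearMap.toSpanSingleton_apply] at hk
      rw [← hm, ← map_smul, hk, map_zero]
    · intro hy; rw [hy, map_zero]
  · exact hq₂.torsionFree
  · intro z
    refine F₂.mono (hq₂.coker_torsion z) (Submodule.comap_mono ?_)
    rintro w ⟨m, hm⟩
    exact ⟨q₁ m, by rw [hq₁₂, hm]⟩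
  · exact hq₂.closed

lemma extensions_agree {F₁ F₂ : RightGabrielFilter R} (hF : F₁.sets ⊆ F₂.sets)
    {M Q₁ Q₂ : Type*} [AddCommGroup M] [Module Rᵐᵒᵖ M]
    [AddCommGroup Q₁] [Module Rᵐᵒᵖ Q₁] [AddCommGroup Q₂] [Module Rᵐᵒᵖ Q₂]
    (q₁ : M →ₗ[Rᵐᵒᵖ] Q₁) (q₂ : M →ₗ[Rᵐᵒᵖ] Q₂) (q₁₂ : Q₁ →ₗ[Rᵐᵒᵖ] Q₂)
    (hq₁ : IsModuleOfQuotients F₁.sets q₁) (hq₂tf : torsionSet F₂.sets Q₂ = {0})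
    (hq₁₂ : ∀ x : M, q₁₂ (q₁ x) = q₂ x)
    {δ : R → R} {d : M → M} {d₁ : Q₁ → Q₁} {d₂ : Q₂ → Q₂}
    (hd₁ : IsRightModuleDerivation δ d₁) (hd₂ : IsRightModuleDerivation δ d₂)
    (he₁ : ∀ x : M, d₁ (q₁ x) = q₁ (d x)) (he₂ : ∀ x : M, d₂ (q₂ x) = q₂ (d x)) :
    ∀ y : Q₁, d₂ (q₁₂ y) = q₁₂ (d₁ y) := by
  intro y
  rw [← sub_eq_zero]
  refine ann_zero hq₂tf (hF (hq₁.coker_torsion y)) fun i hi => ?_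
  rw [Submodule.mem_comap, LinearMap.toSpanSingleton_apply] at hi
  obtain ⟨m, hm⟩ := LinearMap.mem_range.mp hi
  have h1 : d₂ (i • q₁₂ y) = i • d₂ (q₁₂ y) + op (δ (unop i)) • q₁₂ y := by
    have h := hd₂.2 (q₁₂ y) (unop i); rwa [op_unop] at h
  have h2 : d₁ (i • y) = i • d₁ y + op (δ (unop i)) • y := by
    have h := hd₁.2 y (unop i); rwa [op_unop] at h
  have h3 : d₂ (i • q₁₂ y) = i • q₁₂ (d₁ y) + op (δ (unop i)) • q₁₂ y := by
    rw [← map_smul, ← hm, hq₁₂, he₂, ← hq₁₂, ← he₁, hm, h2, map_add, map_smul, map_smul]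
  rw [h3] at h1
  have h4 : i • d₂ (q₁₂ y) = i • q₁₂ (d₁ y) := by
    have h5 := h1.symm
    rwa [add_left_inj] at h5
  rw [smul_sub, h4, sub_self]

theorem derivation_extends_and_agrees' {R : Type*} [Ring R]
    (F₁ F₂ : RightGabrielFilter R) (hF : F₁.sets ⊆ F₂.sets)
    (hdiff₁ : IsDifferentialRight F₁)
    {M Q₁ Q₂ : Type*} [AddCommGroup M] [Module Rᵐᵒᵖ M]
    [AddCommGroup Q₁] [Module Rᵐᵒᵖ Q₁] [AddCommGroup Q₂] [Module Rᵐᵒᵖ Q₂]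
    (q₁ : M →ₗ[Rᵐᵒᵖ] Q₁) (q₂ : M →ₗ[Rᵐᵒᵖ] Q₂) (q₁₂ : Q₁ →ₗ[Rᵐᵒᵖ] Q₂)
    (hq₁ : IsModuleOfQuotients F₁.sets q₁) (hq₂ : IsModuleOfQuotients F₂.sets q₂)
    (hq₁₂ : ∀ x : M, q₁₂ (q₁ x) = q₂ x)
    (h : torsionSet F₂.sets Q₁ = {0} ∨ IsDifferentialRight F₂)
    (δ : R → R) (hδ : IsDerivation δ)
    (d : M → M) (hd : IsRightModuleDerivation δ d) :
    ∃ (d₁ : Q₁ → Q₁) (d₂ : Q₂ → Q₂),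
      IsRightModuleDerivation δ d₁ ∧ IsRightModuleDerivation δ d₂ ∧
      (∀ x : M, d₁ (q₁ x) = q₁ (d x)) ∧ (∀ x : M, d₂ (q₂ x) = q₂ (d x)) ∧
      (∀ y : Q₁, d₂ (q₁₂ y) = q₁₂ (d₁ y)) := by
  obtain ⟨d₁, hd₁, he₁⟩ :=
    exists_extension F₁ q₁ hq₁ hδ hd (diff_pres F₁ hdiff₁ hδ hd)
  rcases h with htf | hdiff₂
  · -- case (i): extend d₁ along q₁₂
    have hq₁₂q := q12_quotients hF q₁ q₂ q₁₂ hq₁ hq₂ hq₁₂ htf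
    have hpres : ∀ x ∈ torsionSet F₂.sets Q₁, d₁ x ∈ torsionSet F₂.sets Q₁ := by
      intro x hx
      rw [htf] at hx ⊢
      rw [Set.mem_singleton_iff] at hx
      rw [hx, deriv_zero' hd₁]
      rfl
    obtain ⟨d₂, hd₂, he₁₂⟩ := exists_extension F₂ q₁₂ hq₁₂q hδ hd₁ hpres
    refine ⟨d₁, d₂, hd₁, hd₂, he₁, fun x => ?_, he₁₂⟩
    rw [← hq₁₂, he₁₂, he₁, hq₁₂]
  · -- case (ii): F₂ differential
    obtain ⟨d₂, hd₂, he₂⟩ :=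
      exists_extension F₂ q₂ hq₂ hδ hd (diff_pres F₂ hdiff₂ hδ hd)
    exact ⟨d₁, d₂, hd₁, hd₂, he₁, he₂,
      extensions_agree hF q₁ q₂ q₁₂ hq₁ hq₂.torsionFree hq₁₂ hd₁ hd₂ he₁ he₂⟩

end Aux

/-- Let `F₁ ⊆ F₂` be Gabriel filters of right ideals of `R` with `F₁`
differential, and `M` a right `R`-module.  If either `M_{F₁}` is torsion free with
respect to the torsion theory corresponding to `F₂`, or `F₂` is differential, then every
`δ`-derivation `d` on `M` (for every derivation `δ` on `R`) extends both to a derivation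
`d₁` on `M_{F₁}` and to a derivation `d₂` on `M_{F₂}` in such a way that the extensions
agree: `d₁q₁ = q₁d`, `d₂q₂ = q₂d` and `d₂q₁₂ = q₁₂d₁`. -/
theorem derivation_extends_and_agrees {R : Type*} [Ring R]
    (F₁ F₂ : RightGabrielFilter R) (hF : F₁.sets ⊆ F₂.sets)
    (hdiff₁ : IsDifferentialRight F₁)
    {M Q₁ Q₂ : Type*} [AddCommGroup M] [Module Rᵐᵒᵖ M]
    [AddCommGroup Q₁] [Module Rᵐᵒᵖ Q₁] [AddCommGroup Q₂] [Module Rᵐᵒᵖ Q₂]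
    (q₁ : M →ₗ[Rᵐᵒᵖ] Q₁) (q₂ : M →ₗ[Rᵐᵒᵖ] Q₂) (q₁₂ : Q₁ →ₗ[Rᵐᵒᵖ] Q₂)
    (hq₁ : IsModuleOfQuotients F₁.sets q₁) (hq₂ : IsModuleOfQuotients F₂.sets q₂)
    (hq₁₂ : ∀ x : M, q₁₂ (q₁ x) = q₂ x)
    (h : torsionSet F₂.sets Q₁ = {0} ∨ IsDifferentialRight F₂)
    (δ : R → R) (hδ : IsDerivation δ)
    (d : M → M) (hd : IsRightModuleDerivation δ d) :
    ∃ (d₁ : Q₁ → Q₁) (d₂ : Q₂ → Q₂),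
      IsRightModuleDerivation δ d₁ ∧ IsRightModuleDerivation δ d₂ ∧
      (∀ x : M, d₁ (q₁ x) = q₁ (d x)) ∧ (∀ x : M, d₂ (q₂ x) = q₂ (d x)) ∧
      (∀ y : Q₁, d₂ (q₁₂ y) = q₁₂ (d₁ y)) := by
  exact derivation_extends_and_agrees' F₁ F₂ hF hdiff₁ q₁ q₂ q₁₂ hq₁ hq₂ hq₁₂ h δ hδ d hd
end

section
/- Let F₁ ⊆ F₂ be Gabriel filters of right ideals of a ring R with corresponding right rings of quotients Q₁ and Q₂. If either (i) F₁ is differential and Q₁ is torsion-free with respect to the torsion theory corresponding to F₂, or (ii) F₁ and F₂ are both differential, or (iii) the torsion theories corresponding to F₁ and F₂ are both faithful, then every derivation δ on R extends both to a derivation on Q₁ and to a derivation on Q₂, and the extensions agree. -/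
open MulOpposite

section Aux

variable {R : Type*} [Ring R]

theorem myDerivZero {δ : R → R} (hδ : IsDerivation δ) : δ 0 = 0 := by
  have h := hδ.1 0 0
  rw [add_zero] at h
  exact (left_eq_add.mp h)

theorem myDerivSub {δ : R → R} (hδ : IsDerivation δ) (a b : R) : δ (a - b) = δ a - δ b := by
  have h := hδ.1 (a - b) b
  rw [sub_add_cancel] at h
  exact eq_sub_of_add_eq h.symm

theorem myDerivOne {δ : R → R} (hδ : IsDerivation δ) : δ 1 = 0 := by
  have h := hδ.2 1 1
  simp only [one_mul, mul_one] at h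
  exact left_eq_add.mp h

variable {Q : Type*} [Ring Q] [Module Rᵐᵒᵖ Q] {F : RightGabrielFilter R}
  {q : R →ₗ[Rᵐᵒᵖ] Q}

theorem mySmulEq (hq : IsRightRingOfQuotients F q) (a : Rᵐᵒᵖ) (z : Q) : a • z = z * q (unop a) := by
  have := hq.smul_def (unop a) z
  rwa [op_unop] at this

theorem mySmulMul (hq : IsRightRingOfQuotients F q) (a : Rᵐᵒᵖ) (u v : Q) : a • (u * v) = u * (a • v) := by
  rw [mySmulEq hq, mySmulEq hq, mul_assoc]

theorem myZeroOfIdeal (hq : IsRightRingOfQuotients F q) {z : Q} {I : Ideal Rᵐᵒᵖ} (hI : I ∈ F.sets)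
    (h : ∀ a ∈ I, a • z = 0) : z = 0 := by
  have hle : I ≤ LinearMap.ker (LinearMap.toSpanSingleton Rᵐᵒᵖ Q z) := by
    intro a ha
    simpa [LinearMap.mem_ker, LinearMap.toSpanSingleton_apply] using h a ha
  have hz : z ∈ torsionSet F.sets Q := F.mono hI hle
  rw [hq.quotients.torsionFree] at hz
  exact hz

theorem myTorsionSmul (hq : IsRightRingOfQuotients F q) {t : R} (ht : t ∈ torsionSet F.sets R) (x : Q) :
    op t • x = 0 := by
  refine myZeroOfIdeal hq (I := LinearMap.ker (LinearMap.toSpanSingleton Rᵐᵒᵖ R t)) ht ?_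
  intro a ha
  have h0 : t * unop a = 0 := by
    simpa [LinearMap.mem_ker, LinearMap.toSpanSingleton_apply] using ha
  have : a * op t = op (t * unop a) := rfl
  rw [smul_smul, this, h0, op_zero, zero_smul]

theorem myQZeroIff (hq : IsRightRingOfQuotients F q) (r : R) : q r = 0 ↔ r ∈ torsionSet F.sets R := by
  have h : r ∈ (LinearMap.ker q : Set R) ↔ r ∈ torsionSet F.sets R := by
    rw [hq.quotients.ker_eq]
  simpa [LinearMap.mem_ker] using h

theorem myInd (hq : IsRightRingOfQuotients F q) {r r' : R} (h : q r = q r') (x : Q) : op r • x = op r' • x := by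
  have h0 : q (r - r') = 0 := by rw [map_sub, h, sub_self]
  have ht : op (r - r') • x = 0 := myTorsionSmul hq ((myQZeroIff hq _).mp h0) x
  have : op (r - r') = op r - op r' := rfl
  rw [this, sub_smul, sub_eq_zero] at ht
  exact ht

theorem myQδCongr (hq : IsRightRingOfQuotients F q) {δ : R → R} (hδ : IsDerivation δ)
    (H : ∀ r : R, r ∈ torsionSet F.sets R → δ r ∈ torsionSet F.sets R)
    {r r' : R} (h : q r = q r') : q (δ r) = q (δ r') := by
  have h0 : q (r - r') = 0 := by rw [map_sub, h, sub_self]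
  have h1 : q (δ (r - r')) = 0 := (myQZeroIff hq _).mpr (H _ ((myQZeroIff hq _).mp h0))
  rw [myDerivSub hδ] at h1
  rw [map_sub, sub_eq_zero] at h1
  exact h1

/-- Membership in the "denominator ideal" of `y`. -/
theorem myMemD {y : Q} {a : Rᵐᵒᵖ}
    (ha : a ∈ Submodule.comap (LinearMap.toSpanSingleton Rᵐᵒᵖ Q y) (LinearMap.range q)) :
    ∃ r : R, q r = a • y := by
  simpa [Submodule.mem_comap, LinearMap.toSpanSingleton_apply, LinearMap.mem_range, eq_comm]
    using ha

theorem myMemD' {y : Q} {a : Rᵐᵒᵖ} {r : R} (h : q r = a • y) :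
    a ∈ Submodule.comap (LinearMap.toSpanSingleton Rᵐᵒᵖ Q y) (LinearMap.range q) := by
  simp only [Submodule.mem_comap, LinearMap.toSpanSingleton_apply, LinearMap.mem_range]
  exact ⟨r, h⟩

end Aux
section Core

variable {R : Type*} [Ring R] {Q : Type*} [Ring Q] [Module Rᵐᵒᵖ Q]
  {F : RightGabrielFilter R} {q : R →ₗ[Rᵐᵒᵖ] Q}

theorem myExistsP (hq : IsRightRingOfQuotients F q) {δ : R → R} (hδ : IsDerivation δ)
    (H : ∀ r : R, r ∈ torsionSet F.sets R → δ r ∈ torsionSet F.sets R) (y : Q) :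
    ∃ z : Q, ∀ (a : Rᵐᵒᵖ) (r : R), q r = a • y →
      a • z = q (δ r) - op (δ (unop a)) • y := by
  classical
  set I := Submodule.comap (LinearMap.toSpanSingleton Rᵐᵒᵖ Q y) (LinearMap.range q) with hIdef
  have hI : I ∈ F.sets := hq.quotients.coker_torsion y
  have hpick : ∀ i : ↥I, ∃ r : R, q r = (i : Rᵐᵒᵖ) • y := fun i => myMemD i.2
  set ρ : ↥I → R := fun i => (hpick i).choose with hρdef
  have hρ : ∀ i : ↥I, q (ρ i) = (i : Rᵐᵒᵖ) • y := fun i => (hpick i).choose_spec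
  have key : ∀ (i : ↥I) (a : Rᵐᵒᵖ), (i : Rᵐᵒᵖ) = a →
      q (δ (ρ i)) - op (δ (unop (i : Rᵐᵒᵖ))) • y
        = q (δ (ρ i)) - op (δ (unop a)) • y := by
    intro i a h; rw [h]
  let f : ↥I →ₗ[Rᵐᵒᵖ] Q :=
    { toFun := fun i => q (δ (ρ i)) - op (δ (unop (i : Rᵐᵒᵖ))) • y
      map_add' := by
        intro i j
        have h1 : q (ρ (i + j)) = q (ρ i + ρ j) := by
          rw [map_add, hρ, hρ, hρ, Submodule.coe_add, add_smul]
        have h2 : q (δ (ρ (i + j))) = q (δ (ρ i)) + q (δ (ρ j)) := by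
          rw [myQδCongr hq hδ H h1, hδ.1, map_add]
        have h3 : op (δ (unop ((i : Rᵐᵒᵖ) + (j : Rᵐᵒᵖ)))) • y
            = op (δ (unop (i : Rᵐᵒᵖ))) • y + op (δ (unop (j : Rᵐᵒᵖ))) • y := by
          rw [unop_add, hδ.1, op_add, add_smul]
        simp only [Submodule.coe_add, h2]
        rw [h3]
        abel
      map_smul' := by
        intro s i
        have hval : ((s • i : ↥I) : Rᵐᵒᵖ) = s * (i : Rᵐᵒᵖ) := rfl
        have h1 : q (ρ (s • i)) = q (ρ i * unop s) := by
          rw [hρ, hval, mul_smul, ← hρ, ← map_smul]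
          rfl
        have h2 : q (δ (ρ (s • i))) =
            q (δ (ρ i)) * q (unop s) + q (ρ i) * q (δ (unop s)) := by
          rw [myQδCongr hq hδ H h1, hδ.2, map_add, hq.map_mul, hq.map_mul]
        have h3 : unop ((s • i : ↥I) : Rᵐᵒᵖ) = unop (i : Rᵐᵒᵖ) * unop s := by
          rw [hval]; rfl
        have h4 : q (ρ i) = y * q (unop (i : Rᵐᵒᵖ)) := by
          rw [hρ, mySmulEq hq]
        simp only [RingHom.id_apply]
        show q (δ (ρ (s • i))) - op (δ (unop ((s • i : ↥I) : Rᵐᵒᵖ))) • y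
          = s • (q (δ (ρ i)) - op (δ (unop (i : Rᵐᵒᵖ))) • y)
        rw [h2, h3, hδ.2, mySmulEq hq, mySmulEq hq, mySmulEq hq, unop_op, map_add,
          hq.map_mul, hq.map_mul, h4]
        noncomm_ring }
  obtain ⟨g, hg⟩ := hq.quotients.closed I hI f
  refine ⟨g 1, ?_⟩
  intro a r hr
  have haI : a ∈ I := myMemD' hr
  have h1 : a • g 1 = g a := by
    rw [← map_smul, smul_eq_mul, mul_one]
  have h2 : g a = f ⟨a, haI⟩ := hg ⟨a, haI⟩
  have h3 : q (δ (ρ ⟨a, haI⟩)) = q (δ r) := by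
    refine myQδCongr hq hδ H ?_
    rw [hρ, hr]
  rw [h1, h2]
  show q (δ (ρ ⟨a, haI⟩)) - op (δ (unop a)) • y = q (δ r) - op (δ (unop a)) • y
  rw [h3]

end Core
section DerivP

variable {R : Type*} [Ring R] {Q : Type*} [Ring Q] [Module Rᵐᵒᵖ Q]
  {F : RightGabrielFilter R} {q : R →ₗ[Rᵐᵒᵖ] Q}

theorem myDerivFromP (hq : IsRightRingOfQuotients F q) {δ : R → R} (hδ : IsDerivation δ)
    {δ' : Q → Q}
    (P : ∀ (y : Q) (a : Rᵐᵒᵖ) (r : R), q r = a • y →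
      a • δ' y = q (δ r) - op (δ (unop a)) • y) :
    IsDerivation δ' ∧ ∀ r : R, δ' (q r) = q (δ r) := by
  have hext : ∀ r : R, δ' (q r) = q (δ r) := by
    intro r
    have h := P (q r) 1 r (one_smul _ _).symm
    rw [one_smul] at h
    rw [h]
    have : unop (1 : Rᵐᵒᵖ) = (1 : R) := rfl
    rw [this, myDerivOne hδ, op_zero, zero_smul, sub_zero]
  refine ⟨⟨?_, ?_⟩, hext⟩
  · -- additivity
    intro x y
    rw [← sub_eq_zero]
    refine myZeroOfIdeal hq
      (F.inf_mem (hq.quotients.coker_torsion x) (hq.quotients.coker_torsion y)) ?_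
    intro a ha
    rw [Submodule.mem_inf] at ha
    obtain ⟨r, hr⟩ := myMemD ha.1
    obtain ⟨s, hs⟩ := myMemD ha.2
    have hxy : q (r + s) = a • (x + y) := by rw [map_add, smul_add, hr, hs]
    rw [smul_sub, smul_add, P (x + y) a (r + s) hxy, P x a r hr, P y a s hs, hδ.1,
      map_add, smul_add]
    abel
  · -- Leibniz
    intro x y
    let A : Ideal Rᵐᵒᵖ :=
      { carrier := {a | ∃ r : R, q r = a • y ∧ op r • x ∈ LinearMap.range q}
        add_mem' := by
          rintro a b ⟨r, hr, hrx⟩ ⟨s, hs, hsx⟩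
          refine ⟨r + s, ?_, ?_⟩
          · rw [map_add, add_smul, hr, hs]
          · have : op (r + s) • x = op r • x + op s • x := by
              rw [op_add, add_smul]
            rw [this]
            exact add_mem hrx hsx
        zero_mem' := by
          refine ⟨0, by rw [map_zero, zero_smul], ?_⟩
          rw [op_zero, zero_smul]
          exact zero_mem _
        smul_mem' := by
          rintro b a ⟨r, hr, hrx⟩
          refine ⟨b • r, ?_, ?_⟩
          · rw [map_smul, smul_eq_mul, mul_smul, hr]
          · have : op (b • r) • x = b • (op r • x) := by
              rw [← mul_smul]
              rfl
            rw [this]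
            obtain ⟨u, hu⟩ := hrx
            rw [← hu, ← map_smul]
            exact LinearMap.mem_range_self _ _ }
    have hA : A ∈ F.sets := by
      refine F.trans (hq.quotients.coker_torsion y) ?_
      intro s hs
      obtain ⟨r, hr⟩ := myMemD hs
      refine F.mono (hq.quotients.coker_torsion (op r • x)) ?_
      intro b hb
      obtain ⟨u, hu⟩ := myMemD hb
      simp only [Submodule.mem_comap, LinearMap.toSpanSingleton_apply, smul_eq_mul]
      refine ⟨b • r, ?_, ?_⟩
      · rw [map_smul, mul_smul, hr]
      · have : op (b • r) • x = b • (op r • x) := by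
          rw [← mul_smul]; rfl
        rw [this, ← hu]
        exact LinearMap.mem_range_self _ _
    rw [← sub_eq_zero]
    refine myZeroOfIdeal hq hA ?_
    rintro a ⟨r, hr, hrx⟩
    obtain ⟨s, hs⟩ := hrx
    -- hs : q s = op r • x
    have hxy : q s = a • (x * y) := by
      rw [mySmulMul hq, ← hr, hs, mySmulEq hq, unop_op]
    have e1 := P (x * y) a s hxy
    have e2 := P x (op r) s hs
    rw [unop_op] at e2
    have e3 := P y a r hr
    have c1 : a • (δ' x * y) = q (δ s) - op (δ r) • x := by
      rw [mySmulMul hq, ← hr]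
      have h0 : op r • δ' x = δ' x * q r := by rw [mySmulEq hq, unop_op]
      rw [← h0, e2]
    have c2 : a • (x * δ' y) = op (δ r) • x - op (δ (unop a)) • (x * y) := by
      rw [mySmulMul hq, e3, mul_sub]
      have h1 : x * q (δ r) = op (δ r) • x := by rw [mySmulEq hq, unop_op]
      have h2 : x * (op (δ (unop a)) • y) = op (δ (unop a)) • (x * y) :=
        (mySmulMul hq _ _ _).symm
      rw [h1, h2]
    rw [smul_sub, smul_add, e1, c1, c2]
    abel

end DerivP
section Diff

variable {R : Type*} [Ring R]

theorem myDiffStable {F : RightGabrielFilter R} (hd : IsDifferentialRight F)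
    {δ : R → R} (hδ : IsDerivation δ) {r : R} (hr : r ∈ torsionSet F.sets R) :
    δ r ∈ torsionSet F.sets R := by
  have hI : LinearMap.ker (LinearMap.toSpanSingleton Rᵐᵒᵖ R r) ∈ F.sets := hr
  obtain ⟨J, hJ, hJd⟩ := hd _ hI
  refine F.mono (F.inf_mem hJ hI) ?_
  intro a ha
  rw [Submodule.mem_inf] at ha
  simp only [LinearMap.mem_ker, LinearMap.toSpanSingleton_apply]
  show δ r * unop a = 0
  have h1 : r * unop a = 0 := by
    have := ha.2
    simpa [LinearMap.mem_ker, LinearMap.toSpanSingleton_apply] using this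
  have h2 : r * δ (unop a) = 0 := by
    have := hJd δ hδ a ha.1
    simpa [LinearMap.mem_ker, LinearMap.toSpanSingleton_apply] using this
  have h3 := hδ.2 r (unop a)
  rw [h1, myDerivZero hδ, h2, add_zero] at h3
  exact h3.symm

theorem myZeroMem {F : RightGabrielFilter R} {M : Type*} [AddCommGroup M] [Module Rᵐᵒᵖ M] :
    (0 : M) ∈ torsionSet F.sets M := by
  show LinearMap.ker (LinearMap.toSpanSingleton Rᵐᵒᵖ M 0) ∈ F.sets
  refine F.mono F.top_mem ?_
  intro a _
  simp [LinearMap.mem_ker, LinearMap.toSpanSingleton_apply]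

end Diff

/-- Let `F₁ ⊆ F₂` be Gabriel filters of right ideals of `R` with
corresponding right rings of quotients `Q₁` and `Q₂`.  If either (i) `F₁` is differential
and `Q₁` is torsion free with respect to the torsion theory corresponding to `F₂`, or
(ii) `F₁` and `F₂` are both differential, or (iii) both torsion theories are faithful,
then every derivation `δ` on `R` extends both to a derivation on `Q₁` and to a derivation
on `Q₂` and the extensions agree. -/
theorem derivation_extends_to_rings_of_quotients {R : Type*} [Ring R]
    (F₁ F₂ : RightGabrielFilter R) (hF : F₁.sets ⊆ F₂.sets)
    {Q₁ Q₂ : Type*} [Ring Q₁] [Module Rᵐᵒᵖ Q₁] [Ring Q₂] [Module Rᵐᵒᵖ Q₂]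
    (q₁ : R →ₗ[Rᵐᵒᵖ] Q₁) (q₂ : R →ₗ[Rᵐᵒᵖ] Q₂)
    (hq₁ : IsRightRingOfQuotients F₁ q₁) (hq₂ : IsRightRingOfQuotients F₂ q₂)
    (q₁₂ : Q₁ →ₗ[Rᵐᵒᵖ] Q₂) (hq₁₂ : ∀ r : R, q₁₂ (q₁ r) = q₂ r)
    (h : (IsDifferentialRight F₁ ∧ torsionSet F₂.sets Q₁ = {0}) ∨
         (IsDifferentialRight F₁ ∧ IsDifferentialRight F₂) ∨
         (torsionSet F₁.sets R = {0} ∧ torsionSet F₂.sets R = {0}))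
    (δ : R → R) (hδ : IsDerivation δ) :
    ∃ (δ₁ : Q₁ → Q₁) (δ₂ : Q₂ → Q₂), IsDerivation δ₁ ∧ IsDerivation δ₂ ∧
      (∀ r : R, δ₁ (q₁ r) = q₁ (δ r)) ∧ (∀ r : R, δ₂ (q₂ r) = q₂ (δ r)) ∧
      (∀ y : Q₁, δ₂ (q₁₂ y) = q₁₂ (δ₁ y)) := by
  classical
  have H₁ : ∀ r : R, r ∈ torsionSet F₁.sets R → δ r ∈ torsionSet F₁.sets R := by
    rcases h with ⟨hd, _⟩ | ⟨hd, _⟩ | ⟨hf, _⟩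
    · exact fun r hr => myDiffStable hd hδ hr
    · exact fun r hr => myDiffStable hd hδ hr
    · intro r hr
      rw [hf] at hr
      rw [Set.mem_singleton_iff] at hr
      subst hr
      rw [myDerivZero hδ]
      exact myZeroMem
  have H₂ : ∀ r : R, r ∈ torsionSet F₂.sets R → δ r ∈ torsionSet F₂.sets R := by
    rcases h with ⟨hd, htf⟩ | ⟨_, hd⟩ | ⟨_, hf⟩
    · intro r hr
      have h1 : q₁ r ∈ torsionSet F₂.sets Q₁ := by
        refine F₂.mono hr ?_
        intro a ha
        simp only [LinearMap.mem_ker, LinearMap.toSpanSingleton_apply] at ha ⊢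
        rw [← map_smul, ha, map_zero]
      rw [htf] at h1
      rw [Set.mem_singleton_iff] at h1
      have h2 : r ∈ torsionSet F₁.sets R := (myQZeroIff hq₁ r).mp h1
      exact hF (myDiffStable hd hδ h2)
    · exact fun r hr => myDiffStable hd hδ hr
    · intro r hr
      rw [hf] at hr
      rw [Set.mem_singleton_iff] at hr
      subst hr
      rw [myDerivZero hδ]
      exact myZeroMem
  let δ₁ : Q₁ → Q₁ := fun y => (myExistsP hq₁ hδ H₁ y).choose
  have P₁ : ∀ (y : Q₁) (a : Rᵐᵒᵖ) (r : R), q₁ r = a • y →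
      a • δ₁ y = q₁ (δ r) - op (δ (unop a)) • y :=
    fun y => (myExistsP hq₁ hδ H₁ y).choose_spec
  let δ₂ : Q₂ → Q₂ := fun y => (myExistsP hq₂ hδ H₂ y).choose
  have P₂ : ∀ (y : Q₂) (a : Rᵐᵒᵖ) (r : R), q₂ r = a • y →
      a • δ₂ y = q₂ (δ r) - op (δ (unop a)) • y :=
    fun y => (myExistsP hq₂ hδ H₂ y).choose_spec
  obtain ⟨hder₁, hext₁⟩ := myDerivFromP hq₁ hδ P₁
  obtain ⟨hder₂, hext₂⟩ := myDerivFromP hq₂ hδ P₂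
  refine ⟨δ₁, δ₂, hder₁, hder₂, hext₁, hext₂, ?_⟩
  intro y
  rw [← sub_eq_zero]
  refine myZeroOfIdeal hq₂ (hF (hq₁.quotients.coker_torsion y)) ?_
  intro a ha
  obtain ⟨r, hr⟩ := myMemD ha
  have e1 := P₁ y a r hr
  have e2 : q₂ r = a • q₁₂ y := by
    rw [← hq₁₂ r, hr, map_smul]
  have e3 := P₂ (q₁₂ y) a r e2
  have e4 : a • q₁₂ (δ₁ y) = q₂ (δ r) - op (δ (unop a)) • q₁₂ y := by
    rw [← map_smul, e1, map_sub, map_smul, hq₁₂]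
  rw [smul_sub, e3, e4, sub_self]
end

section
/- Let R be a ring, F_l a Gabriel filter of left ideals and F_r a Gabriel filter of right ideals of R, inducing the symmetric filter ₗF_r of right ideals of R ⊗_ℤ R^op. For an R-bimodule M with symmetric torsion submodule ₗt_r(M) = t_l(M) ∩ t_r(M) and x ∈ M, the following are equivalent: (1) x ∈ ₗt_r(M); (2) the left annihilator ann_l(x) is in F_l and the right annihilator ann_r(x) is in F_r; (3) ann_r(x) ⊗_ℤ R^op + R ⊗_ℤ ann_l(x) ∈ ₗF_r; (4) the annihilator ₗann_r(x) = {t ∈ R ⊗_ℤ R^op | xt = 0} is in ₗF_r. -/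
open MulOpposite TensorProduct

/-- The enveloping ring `R ⊗_ℤ Rᵐᵒᵖ`; an `R`-bimodule is the same thing as a right
`R ⊗_ℤ Rᵐᵒᵖ`-module, i.e. a left `(R ⊗_ℤ Rᵐᵒᵖ)ᵐᵒᵖ`-module, via `x • (r ⊗ s) = s x r`. -/
abbrev Env (R : Type*) [Ring R] := R ⊗[ℤ] Rᵐᵒᵖ

/-- The left annihilator of an element of an `R`-bimodule, a left ideal of `R`:
`ann_l(x) = {s : R | s • x = 0}`, where the left action of `s` is the action of
`1 ⊗ op s`. -/
def lAnn {R : Type*} [Ring R] (M : Type*) [AddCommGroup M] [Module (Env R)ᵐᵒᵖ M]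
    (x : M) : Ideal R where
  carrier := {s : R | op ((1 : R) ⊗ₜ[ℤ] op s) • x = 0}
  zero_mem' := by
    first
    | (simp; exact zero_smul (Env R)ᵐᵒᵖ x)
    | (show op ((1 : R) ⊗ₜ[ℤ] op (0 : R)) • x = 0
       rw [op_zero, TensorProduct.tmul_zero, op_zero, zero_smul])
  add_mem' := by
    intro a b ha hb
    simp only [Set.mem_setOf_eq] at *
    rw [show ((1 : R) ⊗ₜ[ℤ] op (a + b)) = (1 : R) ⊗ₜ[ℤ] op a + (1 : R) ⊗ₜ[ℤ] op b by
        rw [op_add, TensorProduct.tmul_add],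
      op_add, add_smul, ha, hb, add_zero]
  smul_mem' := by
    intro c s hs
    simp only [Set.mem_setOf_eq, smul_eq_mul] at *
    rw [show ((1 : R) ⊗ₜ[ℤ] op (c * s)) = ((1 : R) ⊗ₜ[ℤ] op s) * ((1 : R) ⊗ₜ[ℤ] op c) by
        rw [Algebra.TensorProduct.tmul_mul_tmul, one_mul, ← op_mul],
      op_mul, mul_smul, hs, smul_zero]

/-- The right annihilator of an element of an `R`-bimodule, a right ideal of `R`
(encoded as a left ideal of `Rᵐᵒᵖ`): `ann_r(x) = {r | x • r = 0}`, where the right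
action of `r` is the action of `r ⊗ 1`. -/
def rAnn {R : Type*} [Ring R] (M : Type*) [AddCommGroup M] [Module (Env R)ᵐᵒᵖ M]
    (x : M) : Ideal Rᵐᵒᵖ where
  carrier := {j : Rᵐᵒᵖ | op (unop j ⊗ₜ[ℤ] (1 : Rᵐᵒᵖ)) • x = 0}
  zero_mem' := by
    first
    | (simp; exact zero_smul (Env R)ᵐᵒᵖ x)
    | (show op (unop (0 : Rᵐᵒᵖ) ⊗ₜ[ℤ] (1 : Rᵐᵒᵖ)) • x = 0
       rw [unop_zero, TensorProduct.zero_tmul, op_zero, zero_smul])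
  add_mem' := by
    intro a b ha hb
    simp only [Set.mem_setOf_eq] at *
    rw [show (unop (a + b) ⊗ₜ[ℤ] (1 : Rᵐᵒᵖ)) =
          unop a ⊗ₜ[ℤ] (1 : Rᵐᵒᵖ) + unop b ⊗ₜ[ℤ] (1 : Rᵐᵒᵖ) by
        rw [unop_add, TensorProduct.add_tmul],
      op_add, add_smul, ha, hb, add_zero]
  smul_mem' := by
    intro c j hj
    simp only [Set.mem_setOf_eq, smul_eq_mul] at *
    rw [show (unop (c * j) ⊗ₜ[ℤ] (1 : Rᵐᵒᵖ)) =
          (unop j ⊗ₜ[ℤ] (1 : Rᵐᵒᵖ)) * (unop c ⊗ₜ[ℤ] (1 : Rᵐᵒᵖ)) by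
        rw [Algebra.TensorProduct.tmul_mul_tmul, one_mul, unop_mul],
      op_mul, mul_smul, hj, smul_zero]

/-- The symmetric annihilator of an element of a bimodule: the right ideal
`{t ∈ R ⊗_ℤ Rᵐᵒᵖ | x t = 0}`. -/
def symAnn {R : Type*} [Ring R] (M : Type*) [AddCommGroup M] [Module (Env R)ᵐᵒᵖ M]
    (x : M) : Ideal (Env R)ᵐᵒᵖ :=
  LinearMap.ker (LinearMap.toSpanSingleton (Env R)ᵐᵒᵖ M x)

/-- The right ideal `J ⊗ Rᵐᵒᵖ + R ⊗ I` of `R ⊗_ℤ Rᵐᵒᵖ` generated by a left ideal `I`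
and a right ideal `J` of `R`. -/
def symGen {R : Type*} [Ring R] (I : Ideal R) (J : Ideal Rᵐᵒᵖ) : Ideal (Env R)ᵐᵒᵖ :=
  Ideal.span ((fun j : Rᵐᵒᵖ => op (unop j ⊗ₜ[ℤ] (1 : Rᵐᵒᵖ))) '' (J : Set Rᵐᵒᵖ) ∪
    (fun i : R => op ((1 : R) ⊗ₜ[ℤ] op i)) '' (I : Set R))

/-- The symmetric Gabriel filter induced by a left Gabriel filter `Fl` and a right
Gabriel filter `Fr`: the right ideals of `R ⊗_ℤ Rᵐᵒᵖ` containing `J ⊗ Rᵐᵒᵖ + R ⊗ I` for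
some `I ∈ Fl` and `J ∈ Fr`. -/
def symSets {R : Type*} [Ring R] (Fl : GabrielFilter R) (Fr : GabrielFilter Rᵐᵒᵖ) :
    Set (Ideal (Env R)ᵐᵒᵖ) :=
  {K | ∃ I ∈ Fl.sets, ∃ J ∈ Fr.sets, symGen I J ≤ K}

/-- The torsion submodule of a bimodule for the symmetric torsion theory induced by `Fl`
and `Fr`: `ₗt_r(M) = t_l(M) ∩ t_r(M)`. -/
def symTorsion {R : Type*} [Ring R] (Fl : GabrielFilter R) (Fr : GabrielFilter Rᵐᵒᵖ)
    (M : Type*) [AddCommGroup M] [Module (Env R)ᵐᵒᵖ M] : Set M :=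
  {x : M | lAnn M x ∈ Fl.sets} ∩ {x : M | rAnn M x ∈ Fr.sets}

/-- `δ'` is the derivation induced on `R ⊗_ℤ Rᵐᵒᵖ` by the derivation `δ` on `R`:
`δ̄(r ⊗ s) = δ r ⊗ s + r ⊗ δ s`. -/
def IsInducedDerivation {R : Type*} [Ring R] (δ : R → R) (δ' : Env R → Env R) : Prop :=
  (∀ a b : Env R, δ' (a + b) = δ' a + δ' b) ∧
    ∀ r s : R, δ' (r ⊗ₜ[ℤ] op s) = δ r ⊗ₜ[ℤ] op s + r ⊗ₜ[ℤ] op (δ s)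

/-- `d` is a `δ`-derivation on the `R`-bimodule `M`: `d` is additive,
`d (x r) = (d x) r + x (δ r)` and `d (s x) = (δ s) x + s (d x)`. -/
def IsBimodDerivation {R : Type*} [Ring R] (δ : R → R) {M : Type*} [AddCommGroup M]
    [Module (Env R)ᵐᵒᵖ M] (d : M → M) : Prop :=
  (∀ x y : M, d (x + y) = d x + d y) ∧
  (∀ (x : M) (r : R),
    d (op (r ⊗ₜ[ℤ] (1 : Rᵐᵒᵖ)) • x) =
      op (r ⊗ₜ[ℤ] (1 : Rᵐᵒᵖ)) • d x + op (δ r ⊗ₜ[ℤ] (1 : Rᵐᵒᵖ)) • x) ∧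
  (∀ (x : M) (s : R),
    d (op ((1 : R) ⊗ₜ[ℤ] op s) • x) =
      op ((1 : R) ⊗ₜ[ℤ] op (δ s)) • x + op ((1 : R) ⊗ₜ[ℤ] op s) • d x)

/-- The symmetric filter induced by `Fl` and `Fr` is differential: for every `I` in the
filter there is `K` in the filter with `δ̄(K) ⊆ I` for all derivations `δ` on `R`. -/
def IsSymDifferential {R : Type*} [Ring R] (Fl : GabrielFilter R)
    (Fr : GabrielFilter Rᵐᵒᵖ) : Prop :=
  ∀ I ∈ symSets Fl Fr, ∃ K ∈ symSets Fl Fr, ∀ δ : R → R, IsDerivation δ →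
    ∀ δ' : Env R → Env R, IsInducedDerivation δ δ' →
      ∀ t : (Env R)ᵐᵒᵖ, t ∈ K → op (δ' (unop t)) ∈ I

/-- `q : M → Q` realizes `Q` as the symmetric module of quotients of the bimodule `M`
with respect to the symmetric filter induced by `Fl` and `Fr`: the kernel of `q` is
`ₗt_r(M)`, `Q` is torsion free, the cokernel of `q` is torsion, and `Q` is closed. -/
structure IsSymModuleOfQuotients {R : Type*} [Ring R] (Fl : GabrielFilter R)
    (Fr : GabrielFilter Rᵐᵒᵖ) {M Q : Type*} [AddCommGroup M] [Module (Env R)ᵐᵒᵖ M]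
    [AddCommGroup Q] [Module (Env R)ᵐᵒᵖ Q] (q : M →ₗ[(Env R)ᵐᵒᵖ] Q) : Prop where
  ker_eq : (LinearMap.ker q : Set M) = symTorsion Fl Fr M
  torsionFree : symTorsion Fl Fr Q = {0}
  coker_torsion : ∀ y : Q,
    Submodule.comap (LinearMap.toSpanSingleton (Env R)ᵐᵒᵖ Q y) (LinearMap.range q) ∈
      symSets Fl Fr
  closed : ∀ K ∈ symSets Fl Fr, ∀ f : ↥K →ₗ[(Env R)ᵐᵒᵖ] Q,
    ∃ g : (Env R)ᵐᵒᵖ →ₗ[(Env R)ᵐᵒᵖ] Q, ∀ t : ↥K, g ↑t = f t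

section Annihilators

variable {R : Type*} [Ring R] {M : Type*} [AddCommGroup M] [Module (Env R)ᵐᵒᵖ M]

theorem symGen_le_symAnn_iff {I : Ideal R} {J : Ideal Rᵐᵒᵖ} (x : M) :
    symGen I J ≤ symAnn M x ↔ I ≤ lAnn M x ∧ J ≤ rAnn M x := by
  rw [symGen, Ideal.span_le, Set.union_subset_iff, Set.image_subset_iff, Set.image_subset_iff]
  -- the generators of `symGen` lie in `symAnn M x` exactly when they satisfy the
  -- membership conditions of `rAnn` and `lAnn`, definitionally
  exact and_comm

theorem symGen_le_symAnn (x : M) :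
    symGen (lAnn (R := R) M x) (rAnn M x) ≤ symAnn M x :=
  (symGen_le_symAnn_iff x).2 ⟨le_rfl, le_rfl⟩

end Annihilators

section SymmetricFilter

variable {R : Type*} [Ring R] {Fl : GabrielFilter R} {Fr : GabrielFilter Rᵐᵒᵖ}

theorem symGen_mem_symSets {I : Ideal R} {J : Ideal Rᵐᵒᵖ} (hI : I ∈ Fl.sets)
    (hJ : J ∈ Fr.sets) : symGen I J ∈ symSets Fl Fr :=
  ⟨I, hI, J, hJ, le_rfl⟩

theorem mem_symSets_of_le {K K' : Ideal (Env R)ᵐᵒᵖ} (hK : K ∈ symSets Fl Fr) (h : K ≤ K') :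
    K' ∈ symSets Fl Fr := by
  obtain ⟨I, hI, J, hJ, hle⟩ := hK
  exact ⟨I, hI, J, hJ, hle.trans h⟩

theorem symAnn_mem_symSets_iff {M : Type*} [AddCommGroup M] [Module (Env R)ᵐᵒᵖ M] (x : M) :
    symAnn M x ∈ symSets Fl Fr ↔ lAnn M x ∈ Fl.sets ∧ rAnn M x ∈ Fr.sets := by
  constructor
  · rintro ⟨I, hI, J, hJ, hle⟩
    obtain ⟨hIl, hJr⟩ := (symGen_le_symAnn_iff x).1 hle
    exact ⟨Fl.mono hI hIl, Fr.mono hJ hJr⟩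
  · rintro ⟨hl, hr⟩
    exact mem_symSets_of_le (symGen_mem_symSets hl hr) (symGen_le_symAnn x)

end SymmetricFilter

/-- Let `Fl` be a Gabriel filter of left ideals and `Fr` a Gabriel
filter of right ideals of `R`, inducing the symmetric filter `ₗF_r` on `R ⊗_ℤ Rᵐᵒᵖ`.
For an `R`-bimodule `M` and `x ∈ M` the following are equivalent: (1) `x ∈ ₗt_r(M)`;
(2) `ann_l(x) ∈ Fl` and `ann_r(x) ∈ Fr`; (3) `ann_r(x) ⊗ Rᵐᵒᵖ + R ⊗ ann_l(x) ∈ ₗF_r`;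
(4) `ₗann_r(x) = {t | x t = 0} ∈ ₗF_r`. -/
theorem symTorsion_iff_annihilators {R : Type*} [Ring R]
    (Fl : GabrielFilter R) (Fr : GabrielFilter Rᵐᵒᵖ)
    {M : Type*} [AddCommGroup M] [Module (Env R)ᵐᵒᵖ M] (x : M) :
    (x ∈ symTorsion Fl Fr M ↔ (lAnn M x ∈ Fl.sets ∧ rAnn M x ∈ Fr.sets)) ∧
    ((lAnn M x ∈ Fl.sets ∧ rAnn M x ∈ Fr.sets) ↔
      symGen (lAnn M x) (rAnn M x) ∈ symSets Fl Fr) ∧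
    (symGen (lAnn M x) (rAnn M x) ∈ symSets Fl Fr ↔ symAnn M x ∈ symSets Fl Fr) := by
  have h23 : lAnn M x ∈ Fl.sets ∧ rAnn M x ∈ Fr.sets →
      symGen (lAnn M x) (rAnn M x) ∈ symSets Fl Fr :=
    fun h => symGen_mem_symSets h.1 h.2
  have h34 : symGen (lAnn M x) (rAnn M x) ∈ symSets Fl Fr → symAnn M x ∈ symSets Fl Fr :=
    fun h => mem_symSets_of_le h (symGen_le_symAnn x)
  have h42 : symAnn M x ∈ symSets Fl Fr → lAnn M x ∈ Fl.sets ∧ rAnn M x ∈ Fr.sets :=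
    (symAnn_mem_symSets_iff x).1
  exact ⟨Iff.rfl, ⟨h23, h42 ∘ h34⟩, ⟨h34, h23 ∘ h42⟩⟩
end
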